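/- arXiv:1809.04587 — 2 statements merged into one kernel-verified Lean document; each statement's English description precedes it below -/
import Mathlib

section
/- Let X_1, X_2, ... be i.i.d. real random variables with E[X_1] = μ > 0 and finite second moment. Define N̂ = sup{ n : X_1 + ... + X_n ≤ 0 } (with N̂ = 0 if the set is empty). Then N̂ is almost surely finite and E[N̂] < ∞. -/
/-!
Since `N̂ ≤ ∑ₙ 𝟙{∃ k > n, Sₖ ≤ 0}`, it suffices to show `∑ₙ P(∃ k > n, Sₖ ≤ 0) < ∞`.
Split `-Xⱼ = gⱼ + zⱼ` with `gⱼ = min (-Xⱼ) L` bounded above and `zⱼ ≥ 0` of small mean (`L` large).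
If `Sₖ ≤ 0`, either the `g`-sum up to `k` exceeds `k t` for some `t > E g`, which by Chernoff's
bound (`eᵘ ≤ 1 + u + u²` for `u ≤ 1`) has probability exponentially small in `k`, or the `z`-sum
over the block `[0, 32ⁱ)` with `k ≤ 32ⁱ < 32 k` exceeds a fixed fraction of `32ⁱ`. Summing over `n`
costs a factor `k`, resp. `32ⁱ`. Inside a block, either the `z`'s truncated at `T₀ 16ⁱ` already
have a large sum (Chernoff again, now with exponent of order `2ⁱ`), or one `zⱼ` exceeds a multiple
of `32ⁱ` (summable against the weight `32²ⁱ` because `E z² < ∞`), or two of them exceed `T₀ 16ⁱ`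
(probability at most `32²ⁱ (E z²)² / (T₀ 16ⁱ)⁴`, by independence and Chebyshev).
-/

open MeasureTheory ProbabilityTheory Finset
open scoped ENNReal

lemma Real.exp_le_one_add_add_sq {u : ℝ} (hu : u ≤ 1) : Real.exp u ≤ 1 + u + u ^ 2 := by
  rcases le_or_gt u (-1) with h | h
  · nlinarith [Real.exp_le_one_iff.mpr (by linarith : u ≤ 0)]
  · have habs : |u| ≤ 1 := abs_le.mpr ⟨h.le, hu⟩
    have hb := (abs_le.mp (Real.exp_bound habs (n := 3) (by norm_num))).2
    have hcube : |u| ^ 3 ≤ u ^ 2 := by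
      rw [pow_succ, sq_abs]
      exact mul_le_of_le_one_right (sq_nonneg u) habs
    norm_num [sum_range_succ, Nat.factorial] at hb
    nlinarith

lemma Real.pow_mul_exp_neg_mul_le (n : ℕ) {β x : ℝ} (hβ : 0 < β) (hx : 0 < x) :
    x ^ n * Real.exp (-(β * x)) ≤ (n + 1).factorial / β ^ (n + 1) / x := by
  have h := Real.pow_div_factorial_le_exp (x := β * x) (mul_pos hβ hx).le (n + 1)
  rw [Real.exp_neg, ← div_eq_mul_inv, div_le_iff₀ (Real.exp_pos _)]
  rw [div_le_iff₀ (by positivity)] at h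
  field_simp
  calc x ^ n * β ^ (n + 1) * x = (β * x) ^ (n + 1) := by ring
    _ ≤ _ := h
    _ = _ := by rw [mul_comm β x, mul_comm]

lemma abs_min_le_abs {z T : ℝ} (hT : 0 ≤ T) : |min z T| ≤ |z| := by
  rcases le_total z T with h | h
  · rw [min_eq_left h]
  · rw [min_eq_right h, abs_of_nonneg hT]
    exact h.trans (le_abs_self z)

lemma sub_min_le_sq_div {x L : ℝ} (hL : 0 < L) : x - min x L ≤ x ^ 2 / L := by
  rw [le_div_iff₀ hL]
  rcases le_total x L with h | h
  · rw [min_eq_left h, sub_self, zero_mul]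
    positivity
  · rw [min_eq_right h]
    nlinarith

lemma sum_le_add_sum_min {ι : Type*} [DecidableEq ι] {s : Finset ι} {f : ι → ℝ} {a T : ℝ}
    (ha : 0 ≤ a) (hT : 0 ≤ T) (hsmall : ∀ j ∈ s, f j ≤ a)
    (hpair : ∀ j ∈ s, ∀ j' ∈ s, j ≠ j' → T ≤ f j → f j' < T) :
    ∑ j ∈ s, f j ≤ a + ∑ j ∈ s, min (f j) T := by
  by_cases hbig : ∃ j₀ ∈ s, T ≤ f j₀
  · obtain ⟨j₀, hj₀, hTj₀⟩ := hbig
    have hrest : ∑ j ∈ s.erase j₀, f j = ∑ j ∈ s.erase j₀, min (f j) T :=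
      sum_congr rfl fun j hj => (min_eq_left
        (hpair j₀ hj₀ j (mem_of_mem_erase hj) (ne_of_mem_erase hj).symm hTj₀).le).symm
    rw [← add_sum_erase s f hj₀, ← add_sum_erase s _ hj₀, min_eq_right hTj₀, hrest]
    linarith [hsmall j₀ hj₀]
  · push Not at hbig
    have hall : ∑ j ∈ s, f j = ∑ j ∈ s, min (f j) T :=
      sum_congr rfl fun j hj => (min_eq_left (hbig j hj).le).symm
    linarith

lemma le_sum_range_or_exists_le_sum_range_pow {g u : ℕ → ℝ} (hgu : ∀ j, g j ≤ u j) {s r : ℝ}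
    (hr : 0 ≤ r) {k : ℕ} (h : k * (s + r) ≤ ∑ j ∈ range k, u j) :
    k * s ≤ ∑ j ∈ range k, g j ∨
      ∃ i, k ≤ 32 ^ i ∧ 32 ^ i * (r / 32) ≤ ∑ j ∈ range (32 ^ i), (u j - g j) := by
  by_cases hg : k * s ≤ ∑ j ∈ range k, g j
  · exact Or.inl hg
  have hk : k ≠ 0 := by rintro rfl; simp at hg
  set i := Nat.log 32 k + 1
  have hki : k ≤ 32 ^ i := (Nat.lt_pow_succ_log_self (by norm_num) k).le
  have hik : (32 : ℝ) ^ i ≤ 32 * k := by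
    have := Nat.pow_log_le_self 32 hk
    exact_mod_cast (by rw [pow_succ]; omega : 32 ^ i ≤ 32 * k)
  refine Or.inr ⟨i, hki, ?_⟩
  calc (32 : ℝ) ^ i * (r / 32) ≤ k * r := by nlinarith
    _ ≤ ∑ j ∈ range k, (u j - g j) := by rw [sum_sub_distrib]; linarith
    _ ≤ _ := sum_le_sum_of_subset_of_nonneg (range_subset_range.2 hki) fun j _ _ =>
      sub_nonneg.2 (hgu j)

lemma tsum_ite_lt_mul (x : ℝ≥0∞) (w : ℕ) : ∑' n : ℕ, (if n < w then x else 0) = w * x := by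
  rw [tsum_eq_sum (s := range w) fun n hn => if_neg (by simpa using hn),
    sum_ite_of_true fun n hn => by simpa using hn, sum_const, card_range, nsmul_eq_mul]

lemma tsum_ite_pow_le_le_ofReal {b : ℕ} (hb : 2 ≤ b) (c : ℝ) :
    ∑' i : ℕ, (if (b : ℝ) ^ i ≤ c then ((b ^ 2) ^ i : ℝ≥0∞) else 0)
      ≤ ENNReal.ofReal ((b * c) ^ 2) := by
  rw [ENNReal.tsum_eq_iSup_sum]
  refine iSup_le fun s => ?_
  rw [← sum_filter]
  set s' := s.filter fun i => (b : ℝ) ^ i ≤ c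
  rcases s'.eq_empty_or_nonempty with h | h
  · simp [h]
  set M := s'.max' h
  have hMc : (b : ℝ) ^ M ≤ c := (mem_filter.1 (s'.max'_mem h)).2
  have hlt : ∑ i ∈ s', (b ^ 2) ^ i < (b ^ 2) ^ (M + 1) :=
    Nat.geomSum_lt (by nlinarith) fun i hi => Nat.lt_succ_of_le (s'.le_max' i hi)
  calc ∑ i ∈ s', ((b ^ 2) ^ i : ℝ≥0∞) = ((∑ i ∈ s', (b ^ 2) ^ i : ℕ) : ℝ≥0∞) := by push_cast; rfl
    _ ≤ ((b ^ 2) ^ (M + 1) : ℕ) := by exact_mod_cast hlt.le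
    _ = ENNReal.ofReal ((b * b ^ M) ^ 2) := by
        rw [← ENNReal.ofReal_natCast]; push_cast; ring_nf
    _ ≤ ENNReal.ofReal ((b * c) ^ 2) := ENNReal.ofReal_le_ofReal (by gcongr)

lemma sSup_le_tsum_indicator {α : Type*} (p : ℕ → α → Prop) (ω : α) :
    sSup {x : ℝ≥0∞ | ∃ n : ℕ, 1 ≤ n ∧ p n ω ∧ x = n}
      ≤ ∑' m : ℕ, {ω | ∃ k, m < k ∧ p k ω}.indicator 1 ω := by
  refine sSup_le ?_
  rintro x ⟨n, -, hn, rfl⟩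
  calc (n : ℝ≥0∞) = ∑ m ∈ range n, {ω | ∃ k, m < k ∧ p k ω}.indicator 1 ω := by
        rw [sum_congr rfl fun m hm => Set.indicator_of_mem
          (show ω ∈ {ω | ∃ k, m < k ∧ p k ω} from ⟨n, mem_range.1 hm, hn⟩) 1]
        simp
    _ ≤ _ := ENNReal.sum_le_tsum _

section

variable {Ω : Type*} [MeasurableSpace Ω] {μ : Measure Ω}

lemma tsum_measure_iUnion_lt_le {ι : Type*} [Countable ι] (F : ι → Set Ω) (w : ι → ℕ) :
    ∑' n : ℕ, μ (⋃ i, ⋃ (_ : n < w i), F i) ≤ ∑' i, (w i : ℝ≥0∞) * μ (F i) :=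
  calc ∑' n : ℕ, μ (⋃ i, ⋃ (_ : n < w i), F i)
      ≤ ∑' n : ℕ, ∑' i, if n < w i then μ (F i) else 0 := by
        refine ENNReal.tsum_le_tsum fun n => (measure_iUnion_le _).trans ?_
        refine ENNReal.tsum_le_tsum fun i => ?_
        split_ifs with h <;> simp [h]
    _ = ∑' i, (w i : ℝ≥0∞) * μ (F i) := by
        rw [ENNReal.tsum_comm]
        exact tsum_congr fun i => tsum_ite_lt_mul _ _

lemma MeasureTheory.MemLp.min_const {U : Ω → ℝ} {p : ℝ≥0∞} (hU : MemLp U p μ) {L : ℝ}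
    (hL : 0 ≤ L) : MemLp (fun ω => min (U ω) L) p μ :=
  hU.mono (hU.1.aemeasurable.min aemeasurable_const).aestronglyMeasurable
    (ae_of_all _ fun ω => by simpa [Real.norm_eq_abs] using abs_min_le_abs hL)

lemma integral_sub_min_le_integral_sq_div [IsFiniteMeasure μ] {U : Ω → ℝ} (hU : MemLp U 2 μ)
    {L : ℝ} (hL : 0 < L) : μ[fun ω => U ω - min (U ω) L] ≤ μ[fun ω => U ω ^ 2] / L := by
  rw [← integral_div]
  exact integral_mono ((hU.sub (hU.min_const hL.le)).integrable one_le_two)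
    (hU.integrable_sq.div_const L) fun ω => sub_min_le_sq_div hL

lemma measure_ge_le_ofReal_integral_sq_div [IsFiniteMeasure μ] {Y : Ω → ℝ} (hY : MemLp Y 2 μ)
    {T : ℝ} (hT : 0 < T) :
    μ {ω | T ≤ Y ω} ≤ ENNReal.ofReal (μ[fun ω => Y ω ^ 2] / T ^ 2) := by
  have hmarkov := mul_meas_ge_le_integral_of_nonneg (ae_of_all μ fun ω => sq_nonneg (Y ω))
    hY.integrable_sq (T ^ 2)
  calc μ {ω | T ≤ Y ω} ≤ μ {ω | T ^ 2 ≤ Y ω ^ 2} :=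
        measure_mono fun ω (h : T ≤ Y ω) => show T ^ 2 ≤ Y ω ^ 2 from pow_le_pow_left₀ hT.le h 2
    _ = ENNReal.ofReal (μ.real {ω | T ^ 2 ≤ Y ω ^ 2}) := (ofReal_measureReal).symm
    _ ≤ _ := ENNReal.ofReal_le_ofReal ((le_div_iff₀' (by positivity)).2 hmarkov)

lemma tsum_pow_mul_measure_ge_le_lintegral {Z : Ω → ℝ} (hZ : Measurable Z) {b : ℕ} (hb : 2 ≤ b)
    {ε : ℝ} (hε : 0 < ε) :
    ∑' i : ℕ, ((b ^ 2) ^ i : ℝ≥0∞) * μ {ω | ε * b ^ i ≤ Z ω}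
      ≤ ∫⁻ ω, ENNReal.ofReal ((b * (Z ω / ε)) ^ 2) ∂μ := by
  have hset : ∀ i : ℕ, MeasurableSet {ω | ε * b ^ i ≤ Z ω} := fun i =>
    measurableSet_le measurable_const hZ
  calc ∑' i : ℕ, ((b ^ 2) ^ i : ℝ≥0∞) * μ {ω | ε * b ^ i ≤ Z ω}
      = ∫⁻ ω, ∑' i : ℕ, {ω | ε * b ^ i ≤ Z ω}.indicator (fun _ => ((b ^ 2) ^ i : ℝ≥0∞)) ω ∂μ := by
        rw [lintegral_tsum fun i => (measurable_const.indicator (hset i)).aemeasurable]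
        exact tsum_congr fun i => (lintegral_indicator_const (hset i) _).symm
    _ ≤ _ := lintegral_mono fun ω => by
        refine le_of_eq_of_le (tsum_congr fun i => ?_) (tsum_ite_pow_le_le_ofReal hb (Z ω / ε))
        simp only [Set.indicator_apply, Set.mem_ofPred_eq, le_div_iff₀ hε, mul_comm]

lemma mgf_le_exp_of_mul_le_one [IsProbabilityMeasure μ] {Y : Ω → ℝ} {θ : ℝ} (hY : MemLp Y 2 μ)
    (hθY : ∀ ω, θ * Y ω ≤ 1) :
    mgf Y μ θ ≤ Real.exp (θ * μ[Y] + θ ^ 2 * μ[fun ω => Y ω ^ 2]) := by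
  have hY1 : Integrable Y μ := hY.integrable one_le_two
  have hquad : Integrable (fun ω => 1 + θ * Y ω + θ ^ 2 * Y ω ^ 2) μ :=
    ((integrable_const 1).add (hY1.const_mul θ)).add (hY.integrable_sq.const_mul _)
  have hexp_le : ∀ ω, Real.exp (θ * Y ω) ≤ 1 + θ * Y ω + θ ^ 2 * Y ω ^ 2 := fun ω => by
    simpa [mul_pow] using Real.exp_le_one_add_add_sq (hθY ω)
  have hexp : Integrable (fun ω => Real.exp (θ * Y ω)) μ :=
    hquad.mono' (Real.continuous_exp.comp_aestronglyMeasurable (hY.1.const_mul θ))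
      (ae_of_all _ fun ω => by simpa [abs_of_pos (Real.exp_pos _)] using hexp_le ω)
  calc mgf Y μ θ ≤ ∫ ω, (1 + θ * Y ω + θ ^ 2 * Y ω ^ 2) ∂μ := integral_mono hexp hquad hexp_le
    _ = (θ * μ[Y] + θ ^ 2 * μ[fun ω => Y ω ^ 2]) + 1 := by
        rw [integral_add (f := fun ω => 1 + θ * Y ω) ((integrable_const 1).add (hY1.const_mul θ))
          (hY.integrable_sq.const_mul _), integral_add (integrable_const 1) (hY1.const_mul θ),
          integral_const, integral_const_mul, integral_const_mul]
        simp only [probReal_univ, smul_eq_mul, one_mul]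
        ring
    _ ≤ _ := Real.add_one_le_exp _

lemma measure_sum_range_ge_le_of_mul_le_one [IsProbabilityMeasure μ] {Y : ℕ → Ω → ℝ}
    (hmeas : ∀ i, Measurable (Y i)) (hindep : iIndepFun Y μ)
    (hident : ∀ i, IdentDistrib (Y i) (Y 0) μ μ) (hY : MemLp (Y 0) 2 μ)
    {θ : ℝ} (hθ : 0 ≤ θ) (hθY : ∀ i ω, θ * Y i ω ≤ 1) (t : ℝ) (k : ℕ) :
    μ {ω | k * t ≤ ∑ j ∈ range k, Y j ω}
      ≤ ENNReal.ofReal (Real.exp (-(θ * (t - μ[Y 0] - θ * μ[fun ω => Y 0 ω ^ 2])) * k)) := by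
  have hmgf : mgf (∑ j ∈ range k, Y j) μ θ = mgf (Y 0) μ θ ^ k := by
    rw [hindep.mgf_sum hmeas, prod_congr rfl fun j _ => mgf_congr_of_identDistrib _ _ (hident j) θ,
      prod_const, card_range]
  have hint : Integrable (fun ω => Real.exp (θ * (∑ j ∈ range k, Y j) ω)) μ := by
    refine (integrable_const (Real.exp k)).mono' ?_ (ae_of_all _ fun ω => ?_)
    · exact Measurable.aestronglyMeasurable (by fun_prop)
    rw [Real.norm_eq_abs, abs_of_pos (Real.exp_pos _), Real.exp_le_exp, Finset.sum_apply, mul_sum]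
    simpa using sum_le_sum fun j (_ : j ∈ range k) => hθY j ω
  have hchernoff := measure_ge_le_exp_mul_mgf (k * t) hθ hint
  rw [hmgf] at hchernoff
  simp only [Finset.sum_apply] at hchernoff
  rw [← ofReal_measureReal]
  refine ENNReal.ofReal_le_ofReal (hchernoff.trans ?_)
  calc Real.exp (-θ * (k * t)) * mgf (Y 0) μ θ ^ k
      ≤ Real.exp (-θ * (k * t)) * Real.exp (θ * μ[Y 0] + θ ^ 2 * μ[fun ω => Y 0 ω ^ 2]) ^ k := by
        gcongr
        · exact mgf_nonneg
        · exact mgf_le_exp_of_mul_le_one hY (hθY 0)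
    _ = _ := by
        rw [← Real.exp_nat_mul, ← Real.exp_add]
        ring_nf

lemma tsum_mul_measure_sum_range_ge_ne_top [IsProbabilityMeasure μ] {Y : ℕ → Ω → ℝ}
    (hmeas : ∀ i, Measurable (Y i)) (hindep : iIndepFun Y μ)
    (hident : ∀ i, IdentDistrib (Y i) (Y 0) μ μ) (hY : MemLp (Y 0) 2 μ)
    {M : ℝ} (hM : 0 < M) (hYM : ∀ i ω, Y i ω ≤ M) {t : ℝ} (ht : μ[Y 0] < t) :
    ∑' k : ℕ, (k : ℝ≥0∞) * μ {ω | k * t ≤ ∑ j ∈ range k, Y j ω} ≠ ⊤ := by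
  set v := μ[fun ω => Y 0 ω ^ 2]
  set δ := t - μ[Y 0]
  have hv : 0 ≤ v := integral_nonneg fun ω => sq_nonneg _
  have hδ : 0 < δ := sub_pos.2 ht
  set θ := min (1 / M) (δ / (2 * (v + 1)))
  have hθ : 0 < θ := lt_min (by positivity) (by positivity)
  have hθY : ∀ i ω, θ * Y i ω ≤ 1 := fun i ω =>
    calc θ * Y i ω ≤ θ * M := mul_le_mul_of_nonneg_left (hYM i ω) hθ.le
      _ ≤ 1 / M * M := mul_le_mul_of_nonneg_right (min_le_left _ _) hM.le
      _ = 1 := by field_simp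
  have hθv : θ * v ≤ δ / 2 :=
    calc θ * v ≤ δ / (2 * (v + 1)) * (v + 1) :=
          mul_le_mul (min_le_right _ _) (by linarith) hv (by positivity)
      _ = δ / 2 := by field_simp
  have hbound : ∀ k : ℕ, (k : ℝ≥0∞) * μ {ω | k * t ≤ ∑ j ∈ range k, Y j ω}
      ≤ ENNReal.ofReal (k ^ 1 * Real.exp (-(θ * δ / 2) * k)) := fun k => by
    rw [ENNReal.ofReal_mul (by positivity), pow_one, ENNReal.ofReal_natCast]
    refine mul_le_mul_right ((measure_sum_range_ge_le_of_mul_le_one hmeas hindep hident hY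
      hθ.le hθY t k).trans (ENNReal.ofReal_le_ofReal (Real.exp_le_exp.2 ?_))) _
    have hrate : θ * δ / 2 ≤ θ * (t - μ[Y 0] - θ * v) := by nlinarith
    nlinarith [(Nat.cast_nonneg k : (0 : ℝ) ≤ k)]
  exact ne_top_of_le_ne_top
    (Real.summable_pow_mul_exp_neg_nat_mul 1 (by positivity)).tsum_ofReal_ne_top
    (ENNReal.tsum_le_tsum hbound)

lemma measure_sum_range_min_ge_le [IsProbabilityMeasure μ] {Z : ℕ → Ω → ℝ}
    (hmeas : ∀ i, Measurable (Z i)) (hindep : iIndepFun Z μ)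
    (hident : ∀ i, IdentDistrib (Z i) (Z 0) μ μ) (hZ : MemLp (Z 0) 2 μ) {a T₀ : ℝ}
    (hT₀ : 0 < T₀) (hmean : 4 * μ[Z 0] ≤ a) (hvar : 8 * μ[fun ω => Z 0 ω ^ 2] ≤ a * T₀)
    (i : ℕ) :
    μ {ω | 32 ^ i * (a / 2) ≤ ∑ j ∈ range (32 ^ i), min (Z j ω) (T₀ * 16 ^ i)}
      ≤ ENNReal.ofReal (Real.exp (-(a / (8 * T₀) * 2 ^ i))) := by
  set T := T₀ * 16 ^ i with hT_def
  have hT₀T : T₀ ≤ T := le_mul_of_one_le_right hT₀.le (one_le_pow₀ (by norm_num))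
  have hT : 0 < T := hT₀.trans_le hT₀T
  have htrunc : Measurable fun x : ℝ => min x T := measurable_id.min measurable_const
  have hW : MemLp (fun ω => min (Z 0 ω) T) 2 μ := hZ.min_const hT.le
  have hWmean : μ[fun ω => min (Z 0 ω) T] ≤ μ[Z 0] :=
    integral_mono (hW.integrable one_le_two) (hZ.integrable one_le_two) fun ω => min_le_left _ _
  have hWsq : μ[fun ω => min (Z 0 ω) T ^ 2] ≤ μ[fun ω => Z 0 ω ^ 2] :=
    integral_mono hW.integrable_sq hZ.integrable_sq fun ω => sq_le_sq.2 (abs_min_le_abs hT.le)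
  have hWvar : T⁻¹ * μ[fun ω => min (Z 0 ω) T ^ 2] ≤ a / 8 :=
    calc T⁻¹ * μ[fun ω => min (Z 0 ω) T ^ 2] ≤ T₀⁻¹ * μ[fun ω => Z 0 ω ^ 2] :=
          mul_le_mul (inv_anti₀ hT₀ hT₀T) hWsq (by positivity) (by positivity)
      _ ≤ a / 8 := by rw [inv_mul_le_iff₀ hT₀]; linarith
  have hchernoff := measure_sum_range_ge_le_of_mul_le_one
    (fun j => (hmeas j).min measurable_const) (hindep.comp (fun _ x => min x T) fun _ => htrunc)
    (fun j => (hident j).comp htrunc) hW (inv_nonneg.2 hT.le)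
    (fun j ω => inv_mul_le_one_of_le₀ (min_le_right _ _) hT.le) (a / 2) (32 ^ i)
  push_cast at hchernoff
  refine hchernoff.trans (ENNReal.ofReal_le_ofReal (Real.exp_le_exp.2 ?_))
  have hrate : a / (8 * T₀) * 2 ^ i = T⁻¹ * (a / 8) * 32 ^ i := by
    rw [show (32 : ℝ) ^ i = 2 ^ i * 16 ^ i by rw [← mul_pow]; norm_num]
    field_simp
    rw [hT_def]
    ring
  have : T⁻¹ * (a / 8) * 32 ^ i ≤ T⁻¹ *
      (a / 2 - μ[fun ω => min (Z 0 ω) T] - T⁻¹ * μ[fun ω => min (Z 0 ω) T ^ 2]) * 32 ^ i := by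
    gcongr
    linarith
  linarith

lemma tsum_pow_mul_measure_sum_range_min_ge_ne_top [IsProbabilityMeasure μ] {Z : ℕ → Ω → ℝ}
    (hmeas : ∀ i, Measurable (Z i)) (hindep : iIndepFun Z μ)
    (hident : ∀ i, IdentDistrib (Z i) (Z 0) μ μ) (hZ : MemLp (Z 0) 2 μ) {a T₀ : ℝ}
    (ha : 0 < a) (hT₀ : 0 < T₀) (hmean : 4 * μ[Z 0] ≤ a)
    (hvar : 8 * μ[fun ω => Z 0 ω ^ 2] ≤ a * T₀) :
    ∑' i : ℕ, (32 ^ i : ℝ≥0∞) *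
      μ {ω | 32 ^ i * (a / 2) ≤ ∑ j ∈ range (32 ^ i), min (Z j ω) (T₀ * 16 ^ i)} ≠ ⊤ := by
  set β := a / (8 * T₀)
  have hβ : 0 < β := by positivity
  have hbound : ∀ i : ℕ, (32 ^ i : ℝ≥0∞) *
      μ {ω | 32 ^ i * (a / 2) ≤ ∑ j ∈ range (32 ^ i), min (Z j ω) (T₀ * 16 ^ i)}
      ≤ ENNReal.ofReal (720 / β ^ 6 * (1 / 2) ^ i) := fun i =>
    calc _ ≤ (32 ^ i : ℝ≥0∞) * ENNReal.ofReal (Real.exp (-(β * 2 ^ i))) :=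
          mul_le_mul_right (measure_sum_range_min_ge_le hmeas hindep hident hZ hT₀ hmean hvar i) _
      _ = ENNReal.ofReal ((2 ^ i) ^ 5 * Real.exp (-(β * 2 ^ i))) := by
          rw [ENNReal.ofReal_mul (by positivity), ← pow_mul, mul_comm i 5, pow_mul,
            ENNReal.ofReal_pow (by norm_num)]
          norm_num
      _ ≤ _ := ENNReal.ofReal_le_ofReal ((Real.pow_mul_exp_neg_mul_le 5 hβ (by positivity)).trans_eq
          (by rw [one_div, inv_pow]; norm_num [Nat.factorial, div_eq_mul_inv]))
  exact ne_top_of_le_ne_top ((summable_geometric_two.mul_left _).tsum_ofReal_ne_top)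
    (ENNReal.tsum_le_tsum hbound)

lemma tsum_pow_mul_measure_iUnion_ge_ne_top {Z : ℕ → Ω → ℝ} (hmeas : ∀ i, Measurable (Z i))
    (hident : ∀ i, IdentDistrib (Z i) (Z 0) μ μ) (hZ : MemLp (Z 0) 2 μ) {b : ℕ} (hb : 2 ≤ b)
    {a : ℝ} (ha : 0 < a) :
    ∑' i : ℕ, (b ^ i : ℝ≥0∞) * μ (⋃ j ∈ range (b ^ i), {ω | a * b ^ i ≤ Z j ω}) ≠ ⊤ := by
  have hunion : ∀ i : ℕ, (b ^ i : ℝ≥0∞) * μ (⋃ j ∈ range (b ^ i), {ω | a * b ^ i ≤ Z j ω})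
      ≤ ((b ^ 2) ^ i : ℝ≥0∞) * μ {ω | a * b ^ i ≤ Z 0 ω} := fun i => by
    have hmarg : ∀ j, μ {ω | a * b ^ i ≤ Z j ω} = μ {ω | a * b ^ i ≤ Z 0 ω} := fun j =>
      (hident j).measure_mem_eq measurableSet_Ici
    calc _ ≤ (b ^ i : ℝ≥0∞) * ∑ j ∈ range (b ^ i), μ {ω | a * b ^ i ≤ Z j ω} :=
          mul_le_mul_right (measure_biUnion_finset_le _ _) _
      _ = _ := by
          rw [sum_congr rfl fun j _ => hmarg j, sum_const, card_range, nsmul_eq_mul]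
          push_cast
          ring
  have hint : Integrable (fun ω => (b * (Z 0 ω / a)) ^ 2) μ :=
    (hZ.integrable_sq.const_mul ((b / a) ^ 2)).congr (ae_of_all _ fun ω => by ring)
  exact ne_top_of_le_ne_top
    ((lintegral_ofReal_ne_top_iff_integrable hint.1 (ae_of_all _ fun ω => sq_nonneg _)).2 hint)
    ((ENNReal.tsum_le_tsum hunion).trans (tsum_pow_mul_measure_ge_le_lintegral (hmeas 0) hb ha))

lemma measure_iUnion_offDiag_ge_le {Z : ℕ → Ω → ℝ} (hindep : iIndepFun Z μ)
    (hident : ∀ i, IdentDistrib (Z i) (Z 0) μ μ) (s : Finset ℕ) (T : ℝ) :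
    μ (⋃ p ∈ s.offDiag, {ω | T ≤ Z p.1 ω} ∩ {ω | T ≤ Z p.2 ω})
      ≤ (#s : ℝ≥0∞) ^ 2 * μ {ω | T ≤ Z 0 ω} ^ 2 := by
  have hmarg : ∀ j, μ (Z j ⁻¹' Set.Ici T) = μ {ω | T ≤ Z 0 ω} := fun j =>
    (hident j).measure_mem_eq measurableSet_Ici
  have hpair : ∀ p ∈ s.offDiag, μ ({ω | T ≤ Z p.1 ω} ∩ {ω | T ≤ Z p.2 ω})
      = μ {ω | T ≤ Z 0 ω} ^ 2 := fun p hp => by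
    rw [sq]
    nth_rewrite 1 [← hmarg p.1]
    rw [← hmarg p.2]
    exact (hindep.indepFun (mem_offDiag.1 hp).2.2).measure_inter_preimage_eq_mul _ _
      measurableSet_Ici measurableSet_Ici
  calc μ (⋃ p ∈ s.offDiag, {ω | T ≤ Z p.1 ω} ∩ {ω | T ≤ Z p.2 ω})
      ≤ ∑ p ∈ s.offDiag, μ ({ω | T ≤ Z p.1 ω} ∩ {ω | T ≤ Z p.2 ω}) :=
        measure_biUnion_finset_le _ _
    _ = #s.offDiag * μ {ω | T ≤ Z 0 ω} ^ 2 := by rw [sum_congr rfl hpair, sum_const, nsmul_eq_mul]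
    _ ≤ (#s : ℝ≥0∞) ^ 2 * μ {ω | T ≤ Z 0 ω} ^ 2 := by
        gcongr
        exact_mod_cast (offDiag_card s).trans_le (Nat.sub_le _ _) |>.trans_eq (sq _).symm

lemma tsum_pow_mul_measure_iUnion_offDiag_ge_ne_top [IsFiniteMeasure μ] {Z : ℕ → Ω → ℝ}
    (hindep : iIndepFun Z μ) (hident : ∀ i, IdentDistrib (Z i) (Z 0) μ μ) (hZ : MemLp (Z 0) 2 μ)
    {T₀ : ℝ} (hT₀ : 0 < T₀) :
    ∑' i : ℕ, (32 ^ i : ℝ≥0∞) * μ (⋃ p ∈ (range (32 ^ i)).offDiag,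
      {ω | T₀ * 16 ^ i ≤ Z p.1 ω} ∩ {ω | T₀ * 16 ^ i ≤ Z p.2 ω}) ≠ ⊤ := by
  set V := μ[fun ω => Z 0 ω ^ 2]
  have hbound : ∀ i : ℕ, (32 ^ i : ℝ≥0∞) * μ (⋃ p ∈ (range (32 ^ i)).offDiag,
      {ω | T₀ * 16 ^ i ≤ Z p.1 ω} ∩ {ω | T₀ * 16 ^ i ≤ Z p.2 ω})
      ≤ ENNReal.ofReal ((V / T₀ ^ 2) ^ 2 * (1 / 2) ^ i) := fun i =>
    calc _ ≤ (32 ^ i : ℝ≥0∞) * ((#(range (32 ^ i)) : ℝ≥0∞) ^ 2 *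
          ENNReal.ofReal (V / (T₀ * 16 ^ i) ^ 2) ^ 2) := by
          gcongr
          refine (measure_iUnion_offDiag_ge_le hindep hident _ _).trans ?_
          gcongr
          exact measure_ge_le_ofReal_integral_sq_div hZ (by positivity)
      _ = ENNReal.ofReal (32 ^ i * ((32 ^ i) ^ 2 * (V / (T₀ * 16 ^ i) ^ 2) ^ 2)) := by
          rw [card_range, ENNReal.ofReal_mul (by positivity), ENNReal.ofReal_mul (by positivity),
            ENNReal.ofReal_pow (by positivity), ENNReal.ofReal_pow (by positivity),
            ENNReal.ofReal_pow (by positivity)]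
          norm_num
          rw [← ENNReal.ofReal_pow (by positivity)]
      _ = ENNReal.ofReal ((V / T₀ ^ 2) ^ 2 * (1 / 2) ^ i) := by
          rw [show (32 : ℝ) ^ i = (2 ^ i) ^ 5 by rw [← pow_mul, mul_comm, pow_mul]; norm_num,
            show (16 : ℝ) ^ i = (2 ^ i) ^ 4 by rw [← pow_mul, mul_comm, pow_mul]; norm_num,
            one_div, inv_pow]
          field_simp
  exact ne_top_of_le_ne_top ((summable_geometric_two.mul_left _).tsum_ofReal_ne_top)
    (ENNReal.tsum_le_tsum hbound)

lemma tsum_pow_mul_measure_sum_range_ge_ne_top [IsProbabilityMeasure μ] {Z : ℕ → Ω → ℝ}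
    (hmeas : ∀ i, Measurable (Z i)) (hindep : iIndepFun Z μ)
    (hident : ∀ i, IdentDistrib (Z i) (Z 0) μ μ) (hZ : MemLp (Z 0) 2 μ) {a : ℝ} (ha : 0 < a)
    (hmean : 4 * μ[Z 0] ≤ a) :
    ∑' i : ℕ, (32 ^ i : ℝ≥0∞) * μ {ω | 32 ^ i * a ≤ ∑ j ∈ range (32 ^ i), Z j ω} ≠ ⊤ := by
  set T₀ := max 1 (8 * μ[fun ω => Z 0 ω ^ 2] / a)
  have hT₀ : 0 < T₀ := lt_max_of_lt_left one_pos
  have hvar : 8 * μ[fun ω => Z 0 ω ^ 2] ≤ a * T₀ := (div_le_iff₀' ha).1 (le_max_right _ _)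
  have hsplit : ∀ i : ℕ, {ω | 32 ^ i * a ≤ ∑ j ∈ range (32 ^ i), Z j ω} ⊆
      ({ω | 32 ^ i * (a / 2) ≤ ∑ j ∈ range (32 ^ i), min (Z j ω) (T₀ * 16 ^ i)} ∪
        ⋃ j ∈ range (32 ^ i), {ω | a / 2 * 32 ^ i ≤ Z j ω}) ∪
      ⋃ p ∈ (range (32 ^ i)).offDiag,
        {ω | T₀ * 16 ^ i ≤ Z p.1 ω} ∩ {ω | T₀ * 16 ^ i ≤ Z p.2 ω} := by
    intro i ω hω
    by_contra hout
    simp only [Set.mem_union, Set.mem_iUnion, Set.mem_ofPred_eq, Set.mem_inter_iff, mem_offDiag,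
      exists_prop, not_or, not_exists, not_and, not_le, Prod.exists] at hout hω
    obtain ⟨⟨hW, hB⟩, hP⟩ := hout
    have := sum_le_add_sum_min (s := range (32 ^ i)) (f := fun j => Z j ω)
      (a := 32 ^ i * (a / 2)) (T := T₀ * 16 ^ i) (by positivity) (by positivity)
      (fun j hj => by linarith [hB j hj]) fun j hj j' hj' hne => hP j j' ⟨hj, hj', hne⟩
    linarith
  have hW := tsum_pow_mul_measure_sum_range_min_ge_ne_top hmeas hindep hident hZ ha hT₀ hmean hvar
  have hB := tsum_pow_mul_measure_iUnion_ge_ne_top hmeas hident hZ (b := 32) (by norm_num)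
    (half_pos ha)
  have hP := tsum_pow_mul_measure_iUnion_offDiag_ge_ne_top hindep hident hZ hT₀
  simp only [Nat.cast_ofNat] at hB
  refine ne_top_of_le_ne_top (ENNReal.add_ne_top.2 ⟨ENNReal.add_ne_top.2 ⟨hW, hB⟩, hP⟩) ?_
  rw [← ENNReal.tsum_add, ← ENNReal.tsum_add]
  refine ENNReal.tsum_le_tsum fun i => ?_
  rw [← mul_add, ← mul_add]
  exact mul_le_mul_right ((measure_mono (hsplit i)).trans
    ((measure_union_le _ _).trans (add_le_add_left (measure_union_le _ _) _))) _

lemma tsum_measure_exists_mul_le_sum_range_ne_top [IsProbabilityMeasure μ] {U : ℕ → Ω → ℝ}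
    (hmeas : ∀ i, Measurable (U i)) (hindep : iIndepFun U μ)
    (hident : ∀ i, IdentDistrib (U i) (U 0) μ μ) (hU : MemLp (U 0) 2 μ) {c : ℝ}
    (hc : μ[U 0] < c) :
    ∑' n : ℕ, μ {ω | ∃ k, n < k ∧ k * c ≤ ∑ j ∈ range k, U j ω} ≠ ⊤ := by
  set δ := c - μ[U 0]
  have hδ : 0 < δ := sub_pos.2 hc
  set L := 256 * (μ[fun ω => U 0 ω ^ 2] + 1) / δ
  have hL : 0 < L := div_pos (by positivity) hδ
  have htrunc : Measurable fun x : ℝ => min x L := measurable_id.min measurable_const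
  have hexcess : Measurable fun x : ℝ => x - min x L := measurable_id.sub htrunc
  have hGmean : μ[fun ω => min (U 0 ω) L] < μ[U 0] + δ / 2 := by
    have := integral_mono ((hU.min_const hL.le).integrable one_le_two) (hU.integrable one_le_two)
      fun ω => min_le_left _ _
    linarith
  have hZmean : 4 * μ[fun ω => U 0 ω - min (U 0 ω) L] ≤ δ / 2 / 32 := by
    have hVL : μ[fun ω => U 0 ω ^ 2] / L ≤ δ / 256 := by
      rw [div_le_iff₀ hL, show δ / 256 * L = μ[fun ω => U 0 ω ^ 2] + 1 by simp only [L]; field_simp]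
      linarith
    linarith [integral_sub_min_le_integral_sq_div hU hL]
  have hGsum := tsum_mul_measure_sum_range_ge_ne_top (Y := fun j ω => min (U j ω) L)
    (fun j => (hmeas j).min measurable_const) (hindep.comp (fun _ x => min x L) fun _ => htrunc)
    (fun j => (hident j).comp htrunc) (hU.min_const hL.le) hL (fun _ _ => min_le_right _ _) hGmean
  have hZsum := tsum_pow_mul_measure_sum_range_ge_ne_top (Z := fun j ω => U j ω - min (U j ω) L)
    (fun j => (hmeas j).sub ((hmeas j).min measurable_const))
    (hindep.comp (fun _ x => x - min x L) fun _ => hexcess) (fun j => (hident j).comp hexcess)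
    (hU.sub (hU.min_const hL.le)) (by positivity) hZmean
  set G : ℕ → Set Ω := fun k => {ω | k * (μ[U 0] + δ / 2) ≤ ∑ j ∈ range k, min (U j ω) L}
  set B : ℕ → Set Ω := fun i =>
    {ω | 32 ^ i * (δ / 2 / 32) ≤ ∑ j ∈ range (32 ^ i), (U j ω - min (U j ω) L)}
  have hcover : ∀ n, {ω | ∃ k, n < k ∧ k * c ≤ ∑ j ∈ range k, U j ω} ⊆
      (⋃ k, ⋃ (_ : n < k), G k) ∪ ⋃ i, ⋃ (_ : n < 32 ^ i), B i := by
    rintro n ω ⟨k, hnk, hk⟩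
    rcases le_sum_range_or_exists_le_sum_range_pow (fun j => min_le_left (U j ω) L)
      (half_pos hδ).le (s := μ[U 0] + δ / 2) (by rwa [add_assoc, add_halves, add_sub_cancel])
      with hg | ⟨i, hki, hz⟩
    · exact Or.inl (Set.mem_iUnion₂.2 ⟨k, hnk, hg⟩)
    · exact Or.inr (Set.mem_iUnion₂.2 ⟨i, hnk.trans_le hki, hz⟩)
  replace hZsum : ∑' i : ℕ, ((32 ^ i : ℕ) : ℝ≥0∞) * μ (B i) ≠ ⊤ := by
    simpa only [Nat.cast_pow, Nat.cast_ofNat] using hZsum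
  refine ne_top_of_le_ne_top (ENNReal.add_ne_top.2 ⟨hGsum, hZsum⟩) ?_
  calc _ ≤ ∑' n : ℕ, (μ (⋃ k, ⋃ (_ : n < k), G k) + μ (⋃ i, ⋃ (_ : n < 32 ^ i), B i)) :=
        ENNReal.tsum_le_tsum fun n => (measure_mono (hcover n)).trans (measure_union_le _ _)
    _ ≤ _ := by
        rw [ENNReal.tsum_add]
        exact add_le_add (tsum_measure_iUnion_lt_le _ id) (tsum_measure_iUnion_lt_le _ (32 ^ ·))

end

/-- If `X 1, X 2, …` are i.i.d. real random variables with mean `μ > 0` and finite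
second moment, then the last time `N̂ = sup{n : X 1 + … + X n ≤ 0}` (equal to `0` if the
set is empty) is almost surely finite and has finite expectation.
Here `N̂` is realized as an `ℝ≥0∞`-valued supremum. -/
theorem stmt1 {Ω : Type*} [MeasureSpace Ω] [IsProbabilityMeasure (ℙ : Measure Ω)]
    (X : ℕ → Ω → ℝ) (hmeas : ∀ i, Measurable (X i))
    (hindep : iIndepFun X ℙ)
    (hident : ∀ i, IdentDistrib (X i) (X 0) ℙ ℙ)
    (μ : ℝ) (hμ : 0 < μ) (hmean : ∫ ω, X 0 ω ∂ℙ = μ)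
    (hmom2 : Integrable (fun ω => (X 0 ω) ^ 2) ℙ)
    (S : ℕ → Ω → ℝ) (hS : ∀ n ω, S n ω = ∑ k ∈ Finset.range n, X k ω)
    (Nhat : Ω → ℝ≥0∞)
    (hNhat : ∀ ω, Nhat ω = sSup {x : ℝ≥0∞ | ∃ n : ℕ, 1 ≤ n ∧ S n ω ≤ 0 ∧ x = n}) :
    (∀ᵐ ω ∂ℙ, Nhat ω < ⊤) ∧ ∫⁻ ω, Nhat ω ∂ℙ < ⊤ := by
  set A : ℕ → Set Ω := fun n => {ω | ∃ k, n < k ∧ S k ω ≤ 0}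
  have hSmeas : ∀ k, Measurable (S k) := fun k =>
    (funext (hS k)).symm ▸ measurable_sum _ fun j _ => hmeas j
  have hA : ∀ n, MeasurableSet (A n) := fun n => by
    simp only [A, Set.ofPred_exists, Set.ofPred_and]
    exact MeasurableSet.iUnion fun k =>
      (MeasurableSet.const _).inter (measurableSet_le (hSmeas k) measurable_const)
  have hX : MemLp (X 0) 2 ℙ := (memLp_two_iff_integrable_sq (hmeas 0).aestronglyMeasurable).2 hmom2
  have hfinite : ∑' n, ℙ (A n) ≠ ⊤ := by
    have := tsum_measure_exists_mul_le_sum_range_ne_top (U := fun j ω => -X j ω)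
      (fun j => (hmeas j).neg) (hindep.comp (fun _ x => -x) fun _ => measurable_neg)
      (fun j => (hident j).comp measurable_neg) hX.neg (c := 0)
      (by rw [integral_neg, hmean]; linarith)
    simpa [A, hS, sum_neg_distrib] using this
  have hbound : ∀ ω, Nhat ω ≤ ∑' n, (A n).indicator 1 ω := fun ω =>
    (hNhat ω).trans_le (sSup_le_tsum_indicator (fun k ω => S k ω ≤ 0) ω)
  have hlint : ∫⁻ ω, ∑' n, (A n).indicator 1 ω ∂ℙ = ∑' n, ℙ (A n) := by
    rw [lintegral_tsum fun n => (measurable_one.indicator (hA n)).aemeasurable]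
    exact tsum_congr fun n => lintegral_indicator_one (hA n)
  rw [← hlint] at hfinite
  exact ⟨(ae_lt_top (Measurable.tsum fun n => measurable_one.indicator (hA n))
      hfinite).mono fun ω h => (hbound ω).trans_lt h,
    (lintegral_mono hbound).trans_lt hfinite.lt_top⟩
end

section
/- Let X_1, X_2, ... be i.i.d. real random variables with mean μ and E[X_1^{2r}] < ∞; let Y_k = X_k 1_{|X_k| ≤ n^{4/5}} - E[X_k 1_{|X_k| ≤ n^{4/5}}]. Then there is a constant K' (independent of n) such that E[(Y_1 + ... + Y_n)^{2r}] ≤ K' · n^r · n^{4r/5}, and consequently P(|Y_1 + ... + Y_n| > n/16) ≤ 16^{2r} K' n^{9r/5 - 2r} → 0 summably against n^{r-1} for r ≥ 2. -/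
/-!
For fixed `n` the truncated variables `Y n k` are independent, centred, bounded by
`b = 2 n^{4/5}`, with second moments at most `v = E[X₀²]`. For any such family the partial sums
satisfy `E[Sₙ^{2l}] ≤ 2^{l(l+1)} (n v + b²)^l`, by induction on `l` and `n`: in the binomial
expansion of `E[(Sₙ + Zₙ)^{2l}]`, which factorises by independence, the term linear in `Zₙ`
vanishes and every other term is `O(v q^{l-1})` with `q = (n + 1) v + b²`; the odd absolute
moments of `Sₙ` are bounded by the even ones via `2c|x|^{2j+1} ≤ x^{2j+2} + c² x^{2j}`.
For `b = 2 n^{4/5}` this is `O(n^{9l/5})`, and Markov's inequality at order `2l` gives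
`P(|Sₙ| > n/16) = O(n^{9l/5 - 2l})`.
-/

open MeasureTheory ProbabilityTheory Finset

lemma two_mul_mul_abs_pow_le (x c : ℝ) (l : ℕ) :
    2 * c * |x| ^ (2 * l + 1) ≤ x ^ (2 * l + 2) + c ^ 2 * x ^ (2 * l) := by
  rw [← (even_two_mul l).pow_abs, ← ((even_two_mul l).add even_two).pow_abs]
  rw [pow_add, pow_succ]
  linear_combination mul_nonneg (pow_nonneg (abs_nonneg x) (2 * l)) (sq_nonneg (|x| - c))

section Moments

variable {Ω : Type*} [MeasurableSpace Ω] {μ : Measure Ω}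

lemma integrable_of_abs_le [IsFiniteMeasure μ] {f : Ω → ℝ} (hf : Measurable f) {C : ℝ}
    (hC : ∀ ω, |f ω| ≤ C) : Integrable f μ :=
  .of_bound hf.aestronglyMeasurable C (ae_of_all _ hC)

lemma integrable_pow_of_abs_le [IsFiniteMeasure μ] {f : Ω → ℝ} (hf : Measurable f) {C : ℝ}
    (hC : ∀ ω, |f ω| ≤ C) (k : ℕ) : Integrable (fun ω => f ω ^ k) μ :=
  integrable_of_abs_le (hf.pow_const k) (C := C ^ k) fun ω => by
    simpa only [abs_pow] using pow_le_pow_left₀ (abs_nonneg _) (hC ω) k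

lemma integrable_abs_pow_of_abs_le [IsFiniteMeasure μ] {f : Ω → ℝ} (hf : Measurable f) {C : ℝ}
    (hC : ∀ ω, |f ω| ≤ C) (k : ℕ) : Integrable (fun ω => |f ω| ^ k) μ := by
  simpa only [abs_pow] using (integrable_pow_of_abs_le (μ := μ) hf hC k).abs

lemma abs_integral_pow_le_of_abs_le [IsFiniteMeasure μ] {W : Ω → ℝ} (hW : Measurable W) {c : ℝ}
    (hc : ∀ ω, |W ω| ≤ c) {k : ℕ} (hk : 2 ≤ k) :
    |∫ ω, W ω ^ k ∂μ| ≤ c ^ (k - 2) * ∫ ω, W ω ^ 2 ∂μ := by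
  have hpt : ∀ ω, |W ω| ^ k ≤ c ^ (k - 2) * W ω ^ 2 := fun ω => by
    rw [← Nat.sub_add_cancel hk, pow_add, sq_abs, Nat.add_sub_cancel]
    exact mul_le_mul_of_nonneg_right (pow_le_pow_left₀ (abs_nonneg _) (hc ω) _) (sq_nonneg _)
  calc |∫ ω, W ω ^ k ∂μ| ≤ ∫ ω, |W ω| ^ k ∂μ := by
        simpa only [abs_pow] using abs_integral_le_integral_abs (μ := μ) (f := fun ω => W ω ^ k)
    _ ≤ ∫ ω, c ^ (k - 2) * W ω ^ 2 ∂μ :=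
        integral_mono (integrable_abs_pow_of_abs_le hW hc k)
          ((integrable_pow_of_abs_le hW hc 2).const_mul _) hpt
    _ = c ^ (k - 2) * ∫ ω, W ω ^ 2 ∂μ := integral_const_mul _ _

lemma integral_abs_pow_le_of_integral_even_pow_le [IsFiniteMeasure μ] {S : Ω → ℝ}
    (hS : Measurable S) {C : ℝ} (hC : ∀ ω, |S ω| ≤ C) {c D : ℝ} (hc : 0 < c) {m : ℕ}
    (hmom : ∀ l ≤ m, ∫ ω, S ω ^ (2 * l) ∂μ ≤ D * c ^ (2 * l)) {j : ℕ} (hj : j ≤ 2 * m) :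
    ∫ ω, |S ω| ^ j ∂μ ≤ D * c ^ j := by
  obtain ⟨l, rfl | rfl⟩ := Nat.even_or_odd' j
  · simpa only [← two_mul, (even_two_mul l).pow_abs] using hmom l (by omega)
  · have hpow := integrable_pow_of_abs_le (μ := μ) hS hC
    refine le_of_mul_le_mul_left ?_ (by positivity : 0 < 2 * c)
    calc 2 * c * ∫ ω, |S ω| ^ (2 * l + 1) ∂μ = ∫ ω, 2 * c * |S ω| ^ (2 * l + 1) ∂μ :=
          (integral_const_mul _ _).symm
      _ ≤ ∫ ω, (S ω ^ (2 * l + 2) + c ^ 2 * S ω ^ (2 * l)) ∂μ :=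
          integral_mono ((integrable_abs_pow_of_abs_le hS hC _).const_mul _)
            ((hpow _).add ((hpow _).const_mul _)) fun ω => two_mul_mul_abs_pow_le (S ω) c l
      _ = ∫ ω, S ω ^ (2 * l + 2) ∂μ + c ^ 2 * ∫ ω, S ω ^ (2 * l) ∂μ := by
          rw [integral_add (hpow _) ((hpow _).const_mul _), integral_const_mul]
      _ ≤ D * c ^ (2 * (l + 1)) + c ^ 2 * (D * c ^ (2 * l)) :=
          add_le_add (hmom (l + 1) (by omega))
            (mul_le_mul_of_nonneg_left (hmom l (by omega)) (sq_nonneg c))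
      _ = 2 * c * (D * c ^ (2 * l + 1)) := by ring

lemma integral_add_pow_of_indepFun [IsFiniteMeasure μ] {S W : Ω → ℝ} (hSW : IndepFun S W μ)
    (hS : Measurable S) (hW : Measurable W) {C C' : ℝ} (hSC : ∀ ω, |S ω| ≤ C)
    (hWC : ∀ ω, |W ω| ≤ C') (N : ℕ) :
    ∫ ω, (S ω + W ω) ^ N ∂μ = ∑ j ∈ range (N + 1),
      (N.choose j : ℝ) * ((∫ ω, S ω ^ j ∂μ) * ∫ ω, W ω ^ (N - j) ∂μ) := by
  simp_rw [add_pow]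
  rw [integral_finsetSum]
  · refine sum_congr rfl fun j _ => ?_
    have hind : IndepFun (fun ω => S ω ^ j) (fun ω => W ω ^ (N - j)) μ :=
      hSW.comp (measurable_id.pow_const j : Measurable fun x : ℝ => x ^ j)
        (measurable_id.pow_const _ : Measurable fun x : ℝ => x ^ (N - j))
    rw [integral_mul_const, hind.integral_fun_mul_eq_mul_integral
      (hS.pow_const j).aestronglyMeasurable (hW.pow_const _).aestronglyMeasurable]
    ring
  · intro j _
    have hprod : ∀ ω, |S ω ^ j * W ω ^ (N - j)| ≤ C ^ j * C' ^ (N - j) := fun ω => by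
      rw [abs_mul, abs_pow, abs_pow]
      exact mul_le_mul (pow_le_pow_left₀ (abs_nonneg _) (hSC ω) j)
        (pow_le_pow_left₀ (abs_nonneg _) (hWC ω) _) (by positivity)
        (pow_nonneg ((abs_nonneg _).trans (hSC ω)) _)
    exact (integrable_of_abs_le ((hS.pow_const j).mul (hW.pow_const _)) hprod).mul_const _

lemma integrable_sq_of_integrable_pow_two_mul [IsFiniteMeasure μ] {f : Ω → ℝ} (hf : Measurable f)
    {r : ℕ} (hr : 1 ≤ r) (h : Integrable (fun ω => f ω ^ (2 * r)) μ) :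
    Integrable (fun ω => f ω ^ 2) μ := by
  have := integrable_norm_rpow_of_le (μ := μ) hf.aestronglyMeasurable (p := 2)
    (q := (2 * r : ℕ)) (by norm_num) (by positivity) (by exact_mod_cast (by omega : 2 ≤ 2 * r))
    (by simpa only [Real.rpow_natCast, Real.norm_eq_abs, (even_two_mul r).pow_abs] using h)
  simpa [Real.norm_eq_abs] using this

lemma measureReal_lt_abs_le_integral_pow_div [IsFiniteMeasure μ] {S : Ω → ℝ} (hS : Measurable S)
    {C : ℝ} (hC : ∀ ω, |S ω| ≤ C) (m : ℕ) {t : ℝ} (ht : 0 < t) :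
    μ.real {ω | t < |S ω|} ≤ (∫ ω, S ω ^ (2 * m) ∂μ) / t ^ (2 * m) := by
  rw [le_div_iff₀ (by positivity), mul_comm]
  have hsub : {ω | t < |S ω|} ⊆ {ω | t ^ (2 * m) ≤ S ω ^ (2 * m)} := fun ω hω => by
    simpa only [Set.mem_ofPred_eq, (even_two_mul m).pow_abs] using
      pow_le_pow_left₀ ht.le (le_of_lt hω) (2 * m)
  exact (mul_le_mul_of_nonneg_left (measureReal_mono hsub) (by positivity)).trans
    (mul_meas_ge_le_integral_of_nonneg (ae_of_all _ fun ω => (even_two_mul m).pow_nonneg _)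
      (integrable_pow_of_abs_le hS hC _) _)

structure IndepCenteredBounded (Z : ℕ → Ω → ℝ) (μ : Measure Ω) (b v : ℝ) : Prop where
  measurable : ∀ i, Measurable (Z i)
  indep : iIndepFun Z μ
  abs_le : ∀ i ω, |Z i ω| ≤ b
  integral_eq_zero : ∀ i, ∫ ω, Z i ω ∂μ = 0
  integral_sq_le : ∀ i, ∫ ω, Z i ω ^ 2 ∂μ ≤ v

lemma indepCenteredBounded_truncation [IsProbabilityMeasure μ] {X : ℕ → Ω → ℝ}
    (hmeas : ∀ i, Measurable (X i)) (hindep : iIndepFun X μ)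
    (hX2 : ∀ i, Integrable (fun ω => X i ω ^ 2) μ) {v : ℝ} (hv : ∀ i, ∫ ω, X i ω ^ 2 ∂μ ≤ v)
    {c : ℝ} (hc : 0 ≤ c) :
    IndepCenteredBounded (fun k ω => (if |X k ω| ≤ c then X k ω else 0) -
      ∫ ω', (if |X k ω'| ≤ c then X k ω' else 0) ∂μ) μ (2 * c) v := by
  set T : ℕ → Ω → ℝ := fun k ω => if |X k ω| ≤ c then X k ω else 0
  have hTmeas : ∀ k, Measurable (T k) := fun k =>
    Measurable.ite (measurableSet_le (hmeas k).abs measurable_const) (hmeas k) measurable_const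
  have hTc : ∀ k ω, |T k ω| ≤ c := fun k ω => by
    simp only [T]
    split_ifs with h
    exacts [h, by simpa using hc]
  have hTint : ∀ k, Integrable (T k) μ := fun k => integrable_of_abs_le (hTmeas k) (hTc k)
  refine ⟨fun k => (hTmeas k).sub measurable_const, ?_, fun k ω => ?_, fun k => ?_, fun k => ?_⟩
  · exact hindep.comp (fun k x => (if |x| ≤ c then x else 0) - ∫ ω', T k ω' ∂μ)
      fun k => (Measurable.ite (measurableSet_le measurable_abs measurable_const)
        measurable_id measurable_const).sub measurable_const
  · have hmean : |∫ ω', T k ω' ∂μ| ≤ c := by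
      simpa using norm_integral_le_of_norm_le_const (μ := μ)
        (ae_of_all _ fun ω => (Real.norm_eq_abs _).trans_le (hTc k ω))
    exact (abs_sub _ _).trans (by linarith [hTc k ω])
  · rw [integral_sub (hTint k) (integrable_const _), integral_const, smul_eq_mul,
      probReal_univ, one_mul]
    exact sub_self _
  · calc ∫ ω, (T k ω - ∫ ω', T k ω' ∂μ) ^ 2 ∂μ = variance (T k) μ :=
          (variance_eq_integral (hTmeas k).aemeasurable).symm
      _ ≤ ∫ ω, T k ω ^ 2 ∂μ := variance_le_expectation_sq (hTmeas k).aestronglyMeasurable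
      _ ≤ ∫ ω, X k ω ^ 2 ∂μ := integral_mono (integrable_pow_of_abs_le (hTmeas k) (hTc k) 2)
          (hX2 k) fun ω => by simp only [T]; split_ifs <;> simp [sq_nonneg]
      _ ≤ v := hv k

namespace IndepCenteredBounded

variable {Z : ℕ → Ω → ℝ} {b v : ℝ}

lemma sq_bound_nonneg (hZ : IndepCenteredBounded Z μ b v) : 0 ≤ v :=
  (integral_nonneg fun _ => sq_nonneg _).trans (hZ.integral_sq_le 0)

lemma measurable_sum (hZ : IndepCenteredBounded Z μ b v) (n : ℕ) :
    Measurable fun ω => ∑ k ∈ range n, Z k ω :=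
  Finset.measurable_sum _ fun k _ => hZ.measurable k

lemma abs_sum_le (hZ : IndepCenteredBounded Z μ b v) (n : ℕ) (ω : Ω) :
    |∑ k ∈ range n, Z k ω| ≤ n * b :=
  (abs_sum_le_sum_abs _ _).trans <| by
    simpa using sum_le_sum fun k (_ : k ∈ range n) => hZ.abs_le k ω

lemma indepFun_sum (hZ : IndepCenteredBounded Z μ b v) (n : ℕ) :
    IndepFun (fun ω => ∑ k ∈ range n, Z k ω) (Z n) μ := by
  simpa only [← Finset.sum_apply] using hZ.indep.indepFun_sum_range_succ hZ.measurable n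

lemma integral_sum_range_succ_pow_eq [IsProbabilityMeasure μ] (hZ : IndepCenteredBounded Z μ b v)
    (n N : ℕ) :
    ∫ ω, (∑ k ∈ range (n + 1), Z k ω) ^ (N + 1) ∂μ =
      ∫ ω, (∑ k ∈ range n, Z k ω) ^ (N + 1) ∂μ + ∑ j ∈ range N, ((N + 1).choose j : ℝ) *
        ((∫ ω, (∑ k ∈ range n, Z k ω) ^ j ∂μ) * ∫ ω, Z n ω ^ (N + 1 - j) ∂μ) := by
  simp_rw [sum_range_succ _ n]
  rw [integral_add_pow_of_indepFun (hZ.indepFun_sum n) (hZ.measurable_sum n)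
    (hZ.measurable n) (hZ.abs_sum_le n) (hZ.abs_le n), sum_range_succ, sum_range_succ]
  simp [hZ.integral_eq_zero n]
  ring

lemma integral_sum_range_succ_pow_le [IsProbabilityMeasure μ] (hZ : IndepCenteredBounded Z μ b v)
    {c D : ℝ} (hbc : b ≤ c) {m n : ℕ}
    (hS : ∀ j ≤ 2 * m, ∫ ω, |∑ k ∈ range n, Z k ω| ^ j ∂μ ≤ D * c ^ j) :
    ∫ ω, (∑ k ∈ range (n + 1), Z k ω) ^ (2 * m + 2) ∂μ ≤
      ∫ ω, (∑ k ∈ range n, Z k ω) ^ (2 * m + 2) ∂μ + 4 ^ (m + 1) * D * v * c ^ (2 * m) := by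
  have hW : ∀ ω, |Z n ω| ≤ c := fun ω => (hZ.abs_le n ω).trans hbc
  have hc : 0 ≤ c := by
    obtain ⟨ω⟩ := nonempty_of_isProbabilityMeasure μ
    exact (abs_nonneg _).trans (hW ω)
  have hD : 0 ≤ D := by simpa using (integral_nonneg fun ω => by positivity).trans (hS 0 (by omega))
  have hv : 0 ≤ v := hZ.sq_bound_nonneg
  have hterm : ∀ j ∈ range (2 * m + 1), ((2 * m + 2).choose j : ℝ) *
      ((∫ ω, (∑ k ∈ range n, Z k ω) ^ j ∂μ) * ∫ ω, Z n ω ^ (2 * m + 2 - j) ∂μ)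
        ≤ (2 * m + 2).choose j * (D * v * c ^ (2 * m)) := by
    intro j hj
    have hj : j ≤ 2 * m := Nat.lt_succ_iff.mp (mem_range.mp hj)
    have hSj : |∫ ω, (∑ k ∈ range n, Z k ω) ^ j ∂μ| ≤ D * c ^ j :=
      (abs_integral_le_integral_abs.trans_eq (by simp only [abs_pow])).trans (hS j hj)
    have hWj : |∫ ω, Z n ω ^ (2 * m + 2 - j) ∂μ| ≤ c ^ (2 * m - j) * v :=
      (abs_integral_pow_le_of_abs_le (hZ.measurable n) hW (by omega)).trans
        (by rw [show 2 * m + 2 - j - 2 = 2 * m - j by omega]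
            exact mul_le_mul_of_nonneg_left (hZ.integral_sq_le n) (pow_nonneg hc _))
    refine mul_le_mul_of_nonneg_left ((le_abs_self _).trans ?_) (Nat.cast_nonneg _)
    calc |(∫ ω, (∑ k ∈ range n, Z k ω) ^ j ∂μ) * ∫ ω, Z n ω ^ (2 * m + 2 - j) ∂μ|
        ≤ D * c ^ j * (c ^ (2 * m - j) * v) := by
          rw [abs_mul]; exact mul_le_mul hSj hWj (abs_nonneg _) ((abs_nonneg _).trans hSj)
      _ = D * v * (c ^ j * c ^ (2 * m - j)) := by ring
      _ = D * v * c ^ (2 * m) := by rw [← pow_add, Nat.add_sub_cancel' hj]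
  have hchoose : ∑ j ∈ range (2 * m + 1), ((2 * m + 2).choose j : ℝ) ≤ 4 ^ (m + 1) := by
    have h := sum_le_sum_of_subset (f := (2 * m + 2).choose)
      (range_subset_range.mpr (by omega : 2 * m + 1 ≤ 2 * m + 2 + 1))
    rw [Nat.sum_range_choose, show 2 * m + 2 = 2 * (m + 1) by ring, pow_mul] at h
    exact_mod_cast h
  rw [hZ.integral_sum_range_succ_pow_eq n (2 * m + 1)]
  gcongr
  calc _ ≤ ∑ j ∈ range (2 * m + 1), ((2 * m + 2).choose j : ℝ) * (D * v * c ^ (2 * m)) :=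
        sum_le_sum hterm
    _ = (∑ j ∈ range (2 * m + 1), ((2 * m + 2).choose j : ℝ)) * (D * v * c ^ (2 * m)) :=
        (sum_mul _ _ _).symm
    _ ≤ 4 ^ (m + 1) * (D * v * c ^ (2 * m)) :=
        mul_le_mul_of_nonneg_right hchoose (by positivity)
    _ = 4 ^ (m + 1) * D * v * c ^ (2 * m) := by ring

lemma integral_sum_range_pow_succ_le [IsProbabilityMeasure μ] (hZ : IndepCenteredBounded Z μ b v)
    (hb : 0 < b) {m : ℕ} {D : ℝ}
    (hlow : ∀ l ≤ m, ∀ n : ℕ,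
      ∫ ω, (∑ k ∈ range n, Z k ω) ^ (2 * l) ∂μ ≤ D * (n * v + b ^ 2) ^ l) (n : ℕ) :
    ∫ ω, (∑ k ∈ range n, Z k ω) ^ (2 * m + 2) ∂μ ≤
      4 ^ (m + 1) * D * (n * v) * (n * v + b ^ 2) ^ m := by
  have hD : 0 ≤ D := by
    simpa using (integral_nonneg fun ω => by positivity).trans (hlow 0 m.zero_le 0)
  have hv : 0 ≤ v := hZ.sq_bound_nonneg
  induction n with
  | zero => simp
  | succ n ih =>
    set q : ℝ := (n + 1 : ℕ) * v + b ^ 2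
    have hq : (n : ℝ) * v + b ^ 2 ≤ q := by simp only [q]; push_cast; nlinarith
    have hbq : b ≤ √q := (le_abs_self b).trans (Real.abs_le_sqrt (by simp only [q]; nlinarith))
    have hS : ∀ j ≤ 2 * m, ∫ ω, |∑ k ∈ range n, Z k ω| ^ j ∂μ ≤ D * √q ^ j :=
      fun j hj => integral_abs_pow_le_of_integral_even_pow_le (hZ.measurable_sum n)
        (hZ.abs_sum_le n) (hb.trans_le hbq) (fun l hl => (hlow l hl n).trans (by
          rw [pow_mul, Real.sq_sqrt (by positivity)]
          exact mul_le_mul_of_nonneg_left (pow_le_pow_left₀ (by positivity) hq l) hD)) hj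
    calc ∫ ω, (∑ k ∈ range (n + 1), Z k ω) ^ (2 * m + 2) ∂μ
        ≤ ∫ ω, (∑ k ∈ range n, Z k ω) ^ (2 * m + 2) ∂μ + 4 ^ (m + 1) * D * v * √q ^ (2 * m) :=
          hZ.integral_sum_range_succ_pow_le hbq hS
      _ ≤ 4 ^ (m + 1) * D * (n * v) * q ^ m + 4 ^ (m + 1) * D * v * q ^ m := by
          rw [pow_mul, Real.sq_sqrt (by positivity)]
          gcongr
          exact ih.trans (by gcongr)
      _ = 4 ^ (m + 1) * D * ((n + 1 : ℕ) * v) * q ^ m := by push_cast; ring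

lemma integral_sum_range_pow_le [IsProbabilityMeasure μ] (hZ : IndepCenteredBounded Z μ b v)
    (hb : 0 < b) (l n : ℕ) :
    ∫ ω, (∑ k ∈ range n, Z k ω) ^ (2 * l) ∂μ ≤ 2 ^ (l * (l + 1)) * (n * v + b ^ 2) ^ l := by
  induction l using Nat.strong_induction_on generalizing n with
  | _ l ih =>
  rcases l with _ | m
  · simp
  have hv : 0 ≤ v := hZ.sq_bound_nonneg
  have hlow : ∀ l ≤ m, ∀ n : ℕ, ∫ ω, (∑ k ∈ range n, Z k ω) ^ (2 * l) ∂μ ≤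
      2 ^ (m * (m + 1)) * (n * v + b ^ 2) ^ l := fun l hl n =>
    (ih l (by omega) n).trans <| mul_le_mul_of_nonneg_right
      (pow_le_pow_right₀ one_le_two (Nat.mul_le_mul hl (by omega))) (by positivity)
  calc ∫ ω, (∑ k ∈ range n, Z k ω) ^ (2 * (m + 1)) ∂μ
      ≤ 4 ^ (m + 1) * 2 ^ (m * (m + 1)) * (n * v) * (n * v + b ^ 2) ^ m :=
        hZ.integral_sum_range_pow_succ_le hb hlow n
    _ ≤ 4 ^ (m + 1) * 2 ^ (m * (m + 1)) * (n * v + b ^ 2) * (n * v + b ^ 2) ^ m := by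
        gcongr; nlinarith
    _ = 2 ^ ((m + 1) * (m + 1 + 1)) * (n * v + b ^ 2) ^ (m + 1) := by
        rw [show (4 : ℝ) = 2 ^ 2 by norm_num, ← pow_mul, ← pow_add,
          show 2 * (m + 1) + m * (m + 1) = (m + 1) * (m + 1 + 1) by ring]
        ring

lemma integral_sum_range_pow_le_rpow [IsProbabilityMeasure μ] {n : ℕ}
    (hZ : IndepCenteredBounded Z μ (2 * (n : ℝ) ^ ((4 : ℝ) / 5)) v) (hn : 1 ≤ n) (l : ℕ) :
    ∫ ω, (∑ k ∈ range n, Z k ω) ^ (2 * l) ∂μ ≤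
      2 ^ (l * (l + 1)) * (v + 4) ^ l * (n : ℝ) ^ l * (n : ℝ) ^ ((4 : ℝ) * l / 5) := by
  have hn1 : (1 : ℝ) ≤ n := by exact_mod_cast hn
  set a : ℝ := (n : ℝ) ^ ((4 : ℝ) / 5)
  have ha1 : 1 ≤ a := Real.one_le_rpow hn1 (by norm_num)
  have han : a ≤ n := Real.rpow_le_self_of_one_le hn1 (by norm_num)
  have hv : 0 ≤ v := hZ.sq_bound_nonneg
  have hal : (n : ℝ) ^ ((4 : ℝ) * l / 5) = a ^ l := by
    rw [← Real.rpow_natCast, ← Real.rpow_mul (by positivity)]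
    ring_nf
  calc ∫ ω, (∑ k ∈ range n, Z k ω) ^ (2 * l) ∂μ
      ≤ 2 ^ (l * (l + 1)) * (n * v + (2 * a) ^ 2) ^ l :=
        hZ.integral_sum_range_pow_le (by positivity) l n
    _ ≤ 2 ^ (l * (l + 1)) * ((v + 4) * n * a) ^ l := by
        gcongr
        nlinarith [mul_le_mul_of_nonneg_left ha1 (by positivity : (0 : ℝ) ≤ n * v),
          mul_le_mul_of_nonneg_right han (by positivity : (0 : ℝ) ≤ a)]
    _ = _ := by rw [hal, mul_pow, mul_pow]; ring

lemma measureReal_lt_abs_sum_le [IsProbabilityMeasure μ] {n : ℕ}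
    (hZ : IndepCenteredBounded Z μ (2 * (n : ℝ) ^ ((4 : ℝ) / 5)) v) (hn : 1 ≤ n) (l : ℕ) :
    μ.real {ω | (n : ℝ) / 16 < |∑ k ∈ range n, Z k ω|} ≤
      16 ^ (2 * l) * (2 ^ (l * (l + 1)) * (v + 4) ^ l) * (n : ℝ) ^ ((9 : ℝ) * l / 5 - 2 * l) := by
  have hn0 : (0 : ℝ) < n := by exact_mod_cast hn
  have hexp : (n : ℝ) ^ ((9 : ℝ) * l / 5 - 2 * l) =
      (n : ℝ) ^ l * (n : ℝ) ^ ((4 : ℝ) * l / 5) / (n : ℝ) ^ (2 * l) := by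
    rw [show (9 : ℝ) * l / 5 - 2 * l = l + 4 * l / 5 - (2 * l : ℕ) by push_cast; ring,
      Real.rpow_sub hn0, Real.rpow_add hn0, Real.rpow_natCast, Real.rpow_natCast]
  calc μ.real {ω | (n : ℝ) / 16 < |∑ k ∈ range n, Z k ω|}
      ≤ (∫ ω, (∑ k ∈ range n, Z k ω) ^ (2 * l) ∂μ) / ((n : ℝ) / 16) ^ (2 * l) :=
        measureReal_lt_abs_le_integral_pow_div (hZ.measurable_sum n) (hZ.abs_sum_le n) l
          (by positivity)
    _ ≤ 2 ^ (l * (l + 1)) * (v + 4) ^ l * (n : ℝ) ^ l * (n : ℝ) ^ ((4 : ℝ) * l / 5) /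
          ((n : ℝ) / 16) ^ (2 * l) := by
        gcongr
        exact hZ.integral_sum_range_pow_le_rpow hn l
    _ = _ := by rw [hexp, div_pow]; field_simp

end IndepCenteredBounded

lemma summable_pow_mul_measureReal_lt_abs_sum [IsProbabilityMeasure μ] {Z : ℕ → ℕ → Ω → ℝ}
    {v : ℝ} (hZ : ∀ n : ℕ, IndepCenteredBounded (Z n) μ (2 * (n : ℝ) ^ ((4 : ℝ) / 5)) v) {r : ℕ}
    (hr : 0 < r) :
    Summable fun n : ℕ =>
      (n : ℝ) ^ (r - 1) * μ.real {ω | (n : ℝ) / 16 < |∑ k ∈ range n, Z n k ω|} := by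
  have hv : 0 ≤ v := (hZ 0).sq_bound_nonneg
  have he : -(r : ℝ) / 5 - 1 < -1 := by
    have : (0 : ℝ) < r := by exact_mod_cast hr
    linarith
  set C : ℝ := 16 ^ (2 * (6 * r)) * (2 ^ (6 * r * (6 * r + 1)) * (v + 4) ^ (6 * r))
  -- Markov's inequality at order `12 r` gives a tail `O(n^{-6r/5})`.
  refine Summable.of_nonneg_of_le (fun n => by positivity) (fun n => ?_)
    ((Real.summable_nat_rpow.mpr he).mul_left C)
  rcases Nat.eq_zero_or_pos n with rfl | hn
  · simp [Real.zero_rpow (he.trans (by norm_num)).ne]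
  have hn0 : (0 : ℝ) < n := by exact_mod_cast hn
  calc (n : ℝ) ^ (r - 1) * μ.real {ω | (n : ℝ) / 16 < |∑ k ∈ range n, Z n k ω|}
      ≤ (n : ℝ) ^ (r - 1) * (C * (n : ℝ) ^ ((9 : ℝ) * (6 * r : ℕ) / 5 - 2 * (6 * r : ℕ))) :=
        mul_le_mul_of_nonneg_left ((hZ n).measureReal_lt_abs_sum_le hn (6 * r)) (by positivity)
    _ = C * (n : ℝ) ^ (-(r : ℝ) / 5 - 1) := by
        rw [← Real.rpow_natCast _ (r - 1), mul_left_comm, ← Real.rpow_add hn0]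
        congr 2
        push_cast [Nat.cast_sub (by omega : 1 ≤ r)]
        ring

end Moments

theorem stmt19_general {Ω : Type*} [MeasureSpace Ω] [IsProbabilityMeasure (ℙ : Measure Ω)]
    (X : ℕ → Ω → ℝ) (hmeas : ∀ i, Measurable (X i))
    (hindep : iIndepFun X ℙ)
    (hident : ∀ i, IdentDistrib (X i) (X 0) ℙ ℙ)
    (r : ℕ) (hr : 2 ≤ r)
    (hmom : Integrable (fun ω => (X 0 ω) ^ (2 * r)) ℙ)
    (Y : ℕ → ℕ → Ω → ℝ)
    (hY : ∀ n k ω, Y n k ω =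
      (if |X k ω| ≤ (n : ℝ) ^ ((4 : ℝ) / 5) then X k ω else 0) -
        ∫ ω', (if |X k ω'| ≤ (n : ℝ) ^ ((4 : ℝ) / 5) then X k ω' else 0) ∂ℙ) :
    ∃ K' : ℝ, 0 ≤ K' ∧
      (∀ n : ℕ, 1 ≤ n →
        ∫ ω, (∑ k ∈ Finset.range n, Y n k ω) ^ (2 * r) ∂ℙ ≤
          K' * (n : ℝ) ^ (r : ℕ) * (n : ℝ) ^ ((4 : ℝ) * r / 5)) ∧
      (∀ n : ℕ, 1 ≤ n →
        ℙ {ω | (n : ℝ) / 16 < |∑ k ∈ Finset.range n, Y n k ω|} ≤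
          ENNReal.ofReal ((16 : ℝ) ^ (2 * r) * K' *
            (n : ℝ) ^ ((9 : ℝ) * r / 5 - 2 * r))) ∧
      Summable (fun n : ℕ => (n : ℝ) ^ (r - 1) *
        (ℙ {ω | (n : ℝ) / 16 < |∑ k ∈ Finset.range n, Y n k ω|}).toReal) := by
  have hsq : ∀ i, IdentDistrib (fun ω => X i ω ^ 2) (fun ω => X 0 ω ^ 2) ℙ ℙ := fun i =>
    (hident i).comp (measurable_id.pow_const 2)
  have hX2 : ∀ i, Integrable (fun ω => X i ω ^ 2) ℙ := fun i =>
    (hsq i).integrable_iff.mpr (integrable_sq_of_integrable_pow_two_mul (hmeas 0) (by omega) hmom)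
  set v := ∫ ω, X 0 ω ^ 2 ∂ℙ
  have hZ : ∀ n : ℕ, IndepCenteredBounded (Y n) ℙ (2 * (n : ℝ) ^ ((4 : ℝ) / 5)) v := fun n => by
    rw [show Y n = _ from funext₂ (hY n)]
    exact indepCenteredBounded_truncation hmeas hindep hX2 (fun i => (hsq i).integral_eq.le)
      (by positivity)
  have hv : 0 ≤ v := (hZ 0).sq_bound_nonneg
  refine ⟨2 ^ (r * (r + 1)) * (v + 4) ^ r, by positivity,
    fun n hn => (hZ n).integral_sum_range_pow_le_rpow hn r, fun n hn => ?_,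
    summable_pow_mul_measureReal_lt_abs_sum hZ (by omega)⟩
  rw [← ENNReal.ofReal_toReal (measure_ne_top _ _)]
  exact ENNReal.ofReal_le_ofReal ((hZ n).measureReal_lt_abs_sum_le hn r)

/-- Moment bound for centered truncated sums: for i.i.d. `X` with finite `2r`-th moment
and `Y n k` the truncation of `X k` at level `n^{4/5}` recentered at its mean, there is
a constant `K'` (independent of `n`) with `E[(Y 1 + … + Y n)^{2r}] ≤ K' nʳ n^{4r/5}`;
hence `P(|Y 1 + … + Y n| > n/16) ≤ 16^{2r} K' n^{9r/5 - 2r}`, which is summable against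
`n^{r-1}` for `r ≥ 2`. -/
theorem stmt19 {Ω : Type*} [MeasureSpace Ω] [IsProbabilityMeasure (ℙ : Measure Ω)]
    (X : ℕ → Ω → ℝ) (hmeas : ∀ i, Measurable (X i))
    (hindep : iIndepFun X ℙ)
    (hident : ∀ i, IdentDistrib (X i) (X 0) ℙ ℙ)
    (μ : ℝ) (hmean : ∫ ω, X 0 ω ∂ℙ = μ)
    (r : ℕ) (hr : 2 ≤ r)
    (hmom : Integrable (fun ω => (X 0 ω) ^ (2 * r)) ℙ)
    (Y : ℕ → ℕ → Ω → ℝ)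
    (hY : ∀ n k ω, Y n k ω =
      (if |X k ω| ≤ (n : ℝ) ^ ((4 : ℝ) / 5) then X k ω else 0) -
        ∫ ω', (if |X k ω'| ≤ (n : ℝ) ^ ((4 : ℝ) / 5) then X k ω' else 0) ∂ℙ) :
    ∃ K' : ℝ, 0 ≤ K' ∧
      (∀ n : ℕ, 1 ≤ n →
        ∫ ω, (∑ k ∈ Finset.range n, Y n k ω) ^ (2 * r) ∂ℙ ≤
          K' * (n : ℝ) ^ (r : ℕ) * (n : ℝ) ^ ((4 : ℝ) * r / 5)) ∧
      (∀ n : ℕ, 1 ≤ n →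
        ℙ {ω | (n : ℝ) / 16 < |∑ k ∈ Finset.range n, Y n k ω|} ≤
          ENNReal.ofReal ((16 : ℝ) ^ (2 * r) * K' *
            (n : ℝ) ^ ((9 : ℝ) * r / 5 - 2 * r))) ∧
      Summable (fun n : ℕ => (n : ℝ) ^ (r - 1) *
        (ℙ {ω | (n : ℝ) / 16 < |∑ k ∈ Finset.range n, Y n k ω|}).toReal) :=
  stmt19_general X hmeas hindep hident r hr hmom Y hY
end
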